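/- arXiv:2605.21649 — 3 statements merged into one kernel-verified Lean document; each statement's English description precedes it below -/
import Mathlib

section
/- For α > 1, the α-entmax transformation of scores s ∈ ℝ^n is given by p_i = max((α−1)s_i − τ, 0)^{1/(α−1)} where τ is chosen so that Σ p_i = 1. Such a threshold τ exists: the function τ ↦ Σ_i max((α−1)s_i − τ, 0)^{1/(α−1)} is continuous, strictly decreasing on the region where it is positive, tends to ∞ as τ → −∞, and equals 0 for τ ≥ (α−1) max_i s_i; hence there is a unique τ with Σ_i max((α−1)s_i − τ, 0)^{1/(α−1)} = 1. -/
theorem entmax_threshold_exists_unique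
    (n : ℕ) (hn : 0 < n) (s : Fin n → ℝ) (α : ℝ) (hα : 1 < α) :
    ∃! τ : ℝ, ∑ i, (max ((α - 1) * s i - τ) 0) ^ ((1 : ℝ) / (α - 1)) = 1 := by
  set c : ℝ := 1 / (α - 1) with hc
  have hc0 : 0 < c := div_pos one_pos (by linarith)
  set a : Fin n → ℝ := fun i => (α - 1) * s i with ha
  set f : ℝ → ℝ := fun τ => ∑ i, (max (a i - τ) 0) ^ c with hf
  -- continuity
  have hcont : Continuous f := by
    apply continuous_finset_sum
    intro i _
    have h1 : Continuous fun τ : ℝ => max (a i - τ) 0 :=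
      (continuous_const.sub continuous_id).max continuous_const
    have h2 : Continuous fun x : ℝ => x ^ c := by
      rw [continuous_iff_continuousAt]
      intro x
      exact Real.continuousAt_rpow_const x c (Or.inr hc0.le)
    exact h2.comp h1
  -- monotonicity lemma
  have hmono : ∀ τ₁ τ₂ : ℝ, τ₁ ≤ τ₂ → ∀ i : Fin n,
      (max (a i - τ₂) 0) ^ c ≤ (max (a i - τ₁) 0) ^ c := by
    intro τ₁ τ₂ h i
    exact Real.rpow_le_rpow (le_max_right _ _)
      (max_le_max (by linarith) le_rfl) hc0.le
  -- strict decrease at a point where a j - τ₂ > 0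
  have hstrict : ∀ τ₁ τ₂ : ℝ, τ₁ < τ₂ → (∃ j : Fin n, τ₂ < a j) →
      f τ₂ < f τ₁ := by
    intro τ₁ τ₂ h ⟨j, hj⟩
    apply Finset.sum_lt_sum (fun i _ => hmono τ₁ τ₂ h.le i)
    refine ⟨j, Finset.mem_univ j, ?_⟩
    apply Real.rpow_lt_rpow (le_max_right _ _) _ hc0
    have h1 : max (a j - τ₂) 0 = a j - τ₂ := max_eq_left (by linarith)
    rw [h1]
    exact lt_of_lt_of_le (by linarith) (le_max_left _ _)
  -- positive value implies some a j > τ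
  have hpos : ∀ τ : ℝ, f τ = 1 → ∃ j : Fin n, τ < a j := by
    intro τ hτ
    by_contra h
    push_neg at h
    have : f τ = 0 := by
      apply Finset.sum_eq_zero
      intro i _
      have : max (a i - τ) 0 = 0 := max_eq_right (by linarith [h i])
      rw [this, Real.zero_rpow (ne_of_gt hc0)]
    rw [hτ] at this; norm_num at this
  -- the max of the a i
  obtain ⟨i₀, -, hi₀⟩ := Finset.exists_max_image Finset.univ a
    ⟨⟨0, hn⟩, Finset.mem_univ _⟩
  set M : ℝ := a i₀ with hM
  have hfM : f M = 0 := by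
    apply Finset.sum_eq_zero
    intro i _
    have : max (a i - M) 0 = 0 := max_eq_right (by linarith [hi₀ i (Finset.mem_univ i)])
    rw [this, Real.zero_rpow (ne_of_gt hc0)]
  have hfM1 : 1 ≤ f (M - 1) := by
    have h1 : (max (a i₀ - (M - 1)) 0) ^ c = 1 := by
      have : max (a i₀ - (M - 1)) 0 = 1 := by
        rw [max_eq_left (by linarith)]; ring
      rw [this, Real.one_rpow]
    calc (1 : ℝ) = (max (a i₀ - (M - 1)) 0) ^ c := h1.symm
      _ ≤ f (M - 1) := Finset.single_le_sum (f := fun i => (max (a i - (M - 1)) 0) ^ c)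
          (fun i _ => Real.rpow_nonneg (le_max_right _ _) c) (Finset.mem_univ i₀)
  -- existence via IVT
  have hIVT := intermediate_value_Icc' (by linarith : M - 1 ≤ M) hcont.continuousOn
  have h1mem : (1 : ℝ) ∈ Set.Icc (f M) (f (M - 1)) := ⟨by rw [hfM]; norm_num, hfM1⟩
  obtain ⟨τ, -, hτ⟩ := hIVT h1mem
  refine ⟨τ, hτ, ?_⟩
  intro τ' hτ'
  have hτ'' : f τ' = 1 := hτ'
  by_contra hne
  rcases lt_or_gt_of_ne hne with h | h
  · have := hstrict τ' τ h (hpos τ hτ)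
    rw [hτ, hτ''] at this; exact lt_irrefl _ this
  · have := hstrict τ τ' h (hpos τ' hτ'')
    rw [hτ, hτ''] at this; exact lt_irrefl _ this
end

section
/- Monotonicity of entmax thresholds in the score vector: for α > 1, if s, s' ∈ ℝ^n satisfy s_i ≤ s'_i for all i, and τ, τ' are the respective thresholds with Σ_i max((α−1)s_i − τ, 0)^{1/(α−1)} = 1 = Σ_i max((α−1)s'_i − τ', 0)^{1/(α−1)}, then τ ≤ τ'. -/
theorem entmax_threshold_monotone
    (n : ℕ) (hn : 0 < n) (α : ℝ) (hα : 1 < α)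
    (s s' : Fin n → ℝ) (hle : ∀ i, s i ≤ s' i)
    (τ τ' : ℝ)
    (hτ : ∑ i, (max ((α - 1) * s i - τ) 0) ^ ((1 : ℝ) / (α - 1)) = 1)
    (hτ' : ∑ i, (max ((α - 1) * s' i - τ') 0) ^ ((1 : ℝ) / (α - 1)) = 1) :
    τ ≤ τ' := by
  by_contra h
  push_neg at h
  have hα1 : 0 < α - 1 := by linarith
  have hc : (0 : ℝ) < 1 / (α - 1) := by positivity
  -- there exists i with positive base in hτ, else sum = 0
  have hex : ∃ i, 0 < (α - 1) * s i - τ := by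
    by_contra hall
    push_neg at hall
    have : ∑ i, (max ((α - 1) * s i - τ) 0) ^ ((1 : ℝ) / (α - 1)) = 0 := by
      apply Finset.sum_eq_zero
      intro i _
      rw [max_eq_right (hall i), Real.zero_rpow (ne_of_gt hc)]
    rw [this] at hτ
    exact zero_ne_one hτ
  obtain ⟨j, hj⟩ := hex
  have key : ∑ i, (max ((α - 1) * s i - τ) 0) ^ ((1 : ℝ) / (α - 1)) <
      ∑ i, (max ((α - 1) * s' i - τ') 0) ^ ((1 : ℝ) / (α - 1)) := by
    apply Finset.sum_lt_sum
    · intro i _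
      apply Real.rpow_le_rpow (le_max_right _ _)
        (max_le_max (by nlinarith [hle i]) le_rfl) hc.le
    · refine ⟨j, Finset.mem_univ j, ?_⟩
      apply Real.rpow_lt_rpow (le_max_right _ _) ?_ hc
      have h1 : (α - 1) * s j - τ < (α - 1) * s' j - τ' := by nlinarith [hle j]
      rw [max_eq_left hj.le, max_eq_left (by linarith)]
      exact h1
  rw [hτ, hτ'] at key
  exact lt_irrefl 1 key
end

section
/- Entmax threshold under restriction to a superset of the support: let p = α-entmax(s) over {1,...,n} with threshold τ and support S. If I_keep ⊇ S, then the entmax distribution computed over the restricted score vector (s_i)_{i∈I_keep} has the same threshold τ, and its probabilities agree with p on I_keep; i.e., Σ_{i∈I_keep} max((α−1)s_i − τ, 0)^{1/(α−1)} = 1. -/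
theorem entmax_threshold_restriction
    (n : ℕ) (s : Fin n → ℝ) (α : ℝ) (hα : 1 < α) (τ : ℝ)
    (hnorm : ∑ i, (max ((α - 1) * s i - τ) 0) ^ ((1 : ℝ) / (α - 1)) = 1)
    (Ikeep : Finset (Fin n))
    (hsupp : ∀ i, (α - 1) * s i > τ → i ∈ Ikeep) :
    ∑ i ∈ Ikeep, (max ((α - 1) * s i - τ) 0) ^ ((1 : ℝ) / (α - 1)) = 1 := by
  have := Finset.sum_subset (Finset.subset_univ Ikeep)
    (f := fun i => (max ((α - 1) * s i - τ) 0) ^ ((1 : ℝ) / (α - 1))) ?_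
  · rw [this, hnorm]
  intro i _ hi
  have h : (α - 1) * s i - τ ≤ 0 := by
    by_contra h
    exact hi (hsupp i (by linarith))
  beta_reduce
  rw [max_eq_right h]
  exact Real.zero_rpow (one_div_ne_zero (by linarith))
end
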